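/- arXiv:1606.07595 — 3 statements merged into one kernel-verified Lean document; each statement's English description precedes it below -/
import Mathlib

section
/- The function F : S²×S² → ℝ, F(p,q) = ⟨p,q⟩ (the Euclidean inner product in ℝ³), satisfies |∇F|² = 2(1 - F²) and ΔF = -4F with respect to the product metric on S²×S². In particular F is an isoparametric function. -/
/-!
The gradient of `F` at `(p, q)` is the tangential part `(q - ⟪p, q⟫ p, p - ⟪p, q⟫ q)` of the
Euclidean gradient `(q, p)`, of squared length `2 (1 - ⟪p, q⟫²)`.

The geodesics satisfy `γ'' = -‖v‖² γ`, so the second derivative of `⟪γ₁, γ₂⟫` at `0` is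
`-(‖v‖² + ‖w‖²) ⟪p, q⟫ + 2 ⟪v, w⟫`. Over an orthonormal frame the first terms add up to `-4 ⟪p, q⟫`.
The mixed terms `∑ ⟪vᵢ, wᵢ⟫` vanish: the unit normals `(p, 0)` and `(0, q)` complete the frame to
an orthonormal basis of `ℝ³ × ℝ³`, the trace of the form `((v, w), (v', w')) ↦ ⟪v, w'⟫` does not
depend on the orthonormal basis and is `0` for the standard one, and the form vanishes on both
normals.
-/

open scoped RealInnerProductSpace

/-- The geodesic of the unit sphere `S² ⊂ ℝ³` starting at `p` with initial velocity `v`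
(tangent to the sphere at `p`). -/
noncomputable def sphGeo (p v : EuclideanSpace ℝ (Fin 3)) (t : ℝ) : EuclideanSpace ℝ (Fin 3) :=
  Real.cos (‖v‖ * t) • p + (Real.sin (‖v‖ * t) / ‖v‖) • v

section InnerProductSpace

variable {E : Type*} [NormedAddCommGroup E] [InnerProductSpace ℝ E]

theorem eq_sub_inner_smul_of_forall_inner_eq {x y g : E} (hx : ‖x‖ = 1)
    (hg : ⟪g, x⟫ = 0) (h : ∀ v, ⟪v, x⟫ = 0 → ⟪g, v⟫ = ⟪y, v⟫) : g = y - ⟪x, y⟫ • x := by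
  set u := g - (y - ⟪x, y⟫ • x)
  have hux : ⟪u, x⟫ = 0 := by
    simp only [u, inner_sub_left, real_inner_smul_left, hg, real_inner_self_eq_norm_sq, hx,
      real_inner_comm x y]
    ring
  have huu : ⟪u, u⟫ = 0 := by
    rw [show ⟪u, u⟫ = ⟪g, u⟫ - ⟪y, u⟫ + ⟪x, y⟫ * ⟪x, u⟫ by
        simp only [u, inner_sub_left, real_inner_smul_left]; ring,
      h u hux, real_inner_comm u x, hux]
    ring
  exact sub_eq_zero.mp (inner_self_eq_zero.mp huu)

theorem norm_sub_inner_smul_sq {x y : E} (hx : ‖x‖ = 1) :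
    ‖y - ⟪x, y⟫ • x‖ ^ 2 = ‖y‖ ^ 2 - ⟪x, y⟫ ^ 2 := by
  rw [norm_sub_sq_real, norm_smul, real_inner_smul_right, hx, mul_one, Real.norm_eq_abs, sq_abs,
    real_inner_comm]
  ring

theorem deriv_deriv_inner_eq {f f' g g' : ℝ → E} {a b : E} {t : ℝ}
    (hf : ∀ s, HasDerivAt f (f' s) s) (hf' : HasDerivAt f' a t)
    (hg : ∀ s, HasDerivAt g (g' s) s) (hg' : HasDerivAt g' b t) :
    deriv (deriv fun s => ⟪f s, g s⟫) t = ⟪a, g t⟫ + 2 * ⟪f' t, g' t⟫ + ⟪f t, b⟫ := by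
  have hderiv : deriv (fun s => ⟪f s, g s⟫) = fun s => ⟪f s, g' s⟫ + ⟪f' s, g s⟫ :=
    funext fun s => ((hf s).inner ℝ (hg s)).deriv
  rw [hderiv, (((hf t).inner ℝ hg').fun_add (hf'.inner ℝ (hg t))).deriv]
  ring

end InnerProductSpace

section ProductOfSpheres

variable {V : Type*} [NormedAddCommGroup V] [InnerProductSpace ℝ V] [FiniteDimensional ℝ V]

theorem OrthonormalBasis.sum_inner_fst_snd_eq_zero {ι : Type*} [Fintype ι]
    (b : OrthonormalBasis ι ℝ (WithLp 2 (V × V))) : ∑ i, ⟪(b i).fst, (b i).snd⟫ = 0 := by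
  let c := stdOrthonormalBasis ℝ V
  -- Parseval in `V` for `c`, then in `V × V` for `b`.
  calc ∑ i, ⟪(b i).fst, (b i).snd⟫
      = ∑ k, ∑ i, ⟪WithLp.toLp 2 (c k, 0), b i⟫ * ⟪b i, WithLp.toLp 2 (0, c k)⟫ := by
        rw [Finset.sum_comm]
        refine Finset.sum_congr rfl fun i _ => ?_
        rw [← c.sum_inner_mul_inner]
        simp [real_inner_comm]
    _ = 0 := by simp only [b.sum_inner_mul_inner]; simp

theorem finrank_withLp_prod_self :
    Module.finrank ℝ (WithLp 2 (V × V)) = 2 * Module.finrank ℝ V := by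
  rw [(WithLp.linearEquiv 2 ℝ (V × V)).finrank_eq, Module.finrank_prod, two_mul]

theorem sum_inner_fst_snd_eq_zero_of_orthonormal_tangent {ι : Type*} [Fintype ι] {p q : V}
    (hp : ‖p‖ = 1) (hq : ‖q‖ = 1) (e : ι → V × V) (he : Orthonormal ℝ (WithLp.toLp 2 ∘ e))
    (htangent : ∀ i, ⟪(e i).1, p⟫ = 0 ∧ ⟪(e i).2, q⟫ = 0)
    (hcard : Fintype.card ι + 2 = 2 * Module.finrank ℝ V) :
    ∑ i, ⟪(e i).1, (e i).2⟫ = 0 := by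
  let f : ι ⊕ Fin 2 → WithLp 2 (V × V) :=
    Sum.elim (WithLp.toLp 2 ∘ e) ![WithLp.toLp 2 (p, 0), WithLp.toLp 2 (0, q)]
  have hf : Orthonormal ℝ f := by
    classical
    rw [orthonormal_iff_ite] at he ⊢
    rintro (i | i) (j | j)
    · simpa [f] using he i j
    · fin_cases j <;> simp [f, htangent]
    · fin_cases i <;> simp [f, real_inner_comm _ p, real_inner_comm _ q, htangent]
    · fin_cases i <;> fin_cases j <;> simp [f, hp, hq]
  let b := (basisOfOrthonormalOfCardEqFinrank hf
    (by simp [hcard, finrank_withLp_prod_self])).toOrthonormalBasis (by simpa using hf)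
  simpa [b, f, Fintype.sum_sum_type] using b.sum_inner_fst_snd_eq_zero

end ProductOfSpheres

section SphereGeodesic

open Real

variable (p v : EuclideanSpace ℝ (Fin 3))

noncomputable def sphGeoDeriv (t : ℝ) : EuclideanSpace ℝ (Fin 3) :=
  (-(‖v‖ * sin (‖v‖ * t))) • p + cos (‖v‖ * t) • v

theorem hasDerivAt_sphGeo (t : ℝ) : HasDerivAt (sphGeo p v) (sphGeoDeriv p v t) t := by
  have hlin : HasDerivAt (fun s : ℝ => ‖v‖ * s) ‖v‖ t := by
    simpa using (hasDerivAt_id t).const_mul ‖v‖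
  have hcos : (‖v‖ * cos (‖v‖ * t) / ‖v‖) • v = cos (‖v‖ * t) • v := by
    rcases eq_or_ne v 0 with rfl | hv
    · simp
    · rw [mul_div_cancel_left₀ _ (norm_ne_zero_iff.mpr hv)]
  refine ((hlin.cos.smul_const p).fun_add ((hlin.sin.div_const ‖v‖).smul_const v)).congr_deriv ?_
  rw [mul_comm (cos _), hcos, sphGeoDeriv, neg_mul, mul_comm]

theorem hasDerivAt_sphGeoDeriv (t : ℝ) :
    HasDerivAt (sphGeoDeriv p v) (-(‖v‖ ^ 2) • sphGeo p v t) t := by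
  have hlin : HasDerivAt (fun s : ℝ => ‖v‖ * s) ‖v‖ t := by
    simpa using (hasDerivAt_id t).const_mul ‖v‖
  have hsin : ‖v‖ ^ 2 * (sin (‖v‖ * t) / ‖v‖) = ‖v‖ * sin (‖v‖ * t) := by
    rcases eq_or_ne ‖v‖ 0 with hv | hv
    · simp [hv]
    · field_simp
  refine (((hlin.sin.const_mul ‖v‖).neg.smul_const p).fun_add
    (hlin.cos.smul_const v)).congr_deriv ?_
  rw [sphGeo, smul_add, smul_smul, smul_smul]
  simp only [neg_mul, hsin]
  congr 2 <;> ring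

theorem deriv_deriv_inner_sphGeo (q w : EuclideanSpace ℝ (Fin 3)) :
    deriv (deriv fun s => ⟪sphGeo p v s, sphGeo q w s⟫) 0
      = -(‖v‖ ^ 2 + ‖w‖ ^ 2) * ⟪p, q⟫ + 2 * ⟪v, w⟫ := by
  rw [deriv_deriv_inner_eq (hasDerivAt_sphGeo p v) (hasDerivAt_sphGeoDeriv p v 0)
    (hasDerivAt_sphGeo q w) (hasDerivAt_sphGeoDeriv q w 0)]
  simp [sphGeo, sphGeoDeriv, real_inner_smul_left, real_inner_smul_right]
  ring

end SphereGeodesic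

/-- Here the Riemannian gradient at `(p, q)` is the tangent vector `(g₁, g₂)` with
`⟪g₁, v⟫ + ⟪g₂, w⟫ = dF(v, w) = ⟪v, q⟫ + ⟪p, w⟫` for all tangent `(v, w)`, and the
Laplace–Beltrami operator is the sum of the second derivatives of `F` along the geodesics in the
directions of an orthonormal tangent frame. -/
theorem stmt_2 (p q : EuclideanSpace ℝ (Fin 3)) (hp : ‖p‖ = 1) (hq : ‖q‖ = 1) :
    -- |∇F|² = 2(1 - F²) at (p,q):
    (∀ g₁ g₂ : EuclideanSpace ℝ (Fin 3), ⟪g₁, p⟫ = 0 → ⟪g₂, q⟫ = 0 →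
      (∀ v w : EuclideanSpace ℝ (Fin 3), ⟪v, p⟫ = 0 → ⟪w, q⟫ = 0 →
        ⟪g₁, v⟫ + ⟪g₂, w⟫ = ⟪q, v⟫ + ⟪p, w⟫) →
      ‖g₁‖ ^ 2 + ‖g₂‖ ^ 2 = 2 * (1 - ⟪p, q⟫ ^ 2)) ∧
    -- ΔF = -4F at (p,q):
    (∀ e : Fin 4 → EuclideanSpace ℝ (Fin 3) × EuclideanSpace ℝ (Fin 3),
      (∀ i, ⟪(e i).1, p⟫ = 0 ∧ ⟪(e i).2, q⟫ = 0) →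
      (∀ i j, ⟪(e i).1, (e j).1⟫ + ⟪(e i).2, (e j).2⟫ = if i = j then 1 else 0) →
      ∑ i, deriv (deriv (fun s => ⟪sphGeo p (e i).1 s, sphGeo q (e i).2 s⟫)) 0 = -4 * ⟪p, q⟫) := by
  refine ⟨fun g₁ g₂ hg₁ hg₂ hdF => ?_, fun e htangent horth => ?_⟩
  · have h₁ : g₁ = q - ⟪p, q⟫ • p := eq_sub_inner_smul_of_forall_inner_eq hp hg₁
      fun v hv => by simpa using hdF v 0 hv (inner_zero_left _)
    have h₂ : g₂ = p - ⟪q, p⟫ • q := eq_sub_inner_smul_of_forall_inner_eq hq hg₂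
      fun w hw => by simpa using hdF 0 w (inner_zero_left _) hw
    rw [h₁, h₂, norm_sub_inner_smul_sq hp, norm_sub_inner_smul_sq hq, hp, hq, real_inner_comm]
    ring
  · have hunit : ∀ i, ‖(e i).1‖ ^ 2 + ‖(e i).2‖ ^ 2 = 1 := fun i => by
      simpa [real_inner_self_eq_norm_sq] using horth i i
    have hmixed : ∑ i, ⟪(e i).1, (e i).2⟫ = 0 :=
      sum_inner_fst_snd_eq_zero_of_orthonormal_tangent hp hq e
        (orthonormal_iff_ite.mpr fun i j => by simpa using horth i j) htangent
        (by simp [finrank_euclideanSpace])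
    simp only [deriv_deriv_inner_sphGeo, hunit, Finset.sum_add_distrib, ← Finset.mul_sum, hmixed]
    norm_num
end

section
/- For t ∈ (-1,1), the shape operator of M_t ⊂ S²×S² with respect to the unit normal N, given by A(v₁,v₂) = (1/√(2(1-t²)))·{t(v₁,v₂) - (v₂,v₁) + ⟨p,v₂⟩(p,-q)}, has eigenvalues λ₁ = 0, λ₂ = (1/√2)√((1+t)/(1-t)), λ₃ = -(1/√2)√((1-t)/(1+t)), with eigenvectors X = PN - ⟨PN,N⟩N, J₁N, J₂N respectively. In particular λ₂λ₃ = -1/2 and the Gauss–Kronecker curvature λ₁λ₂λ₃ is zero. -/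
open Matrix

/-- Normalizing constant `1/√(2(1-t²))`. -/
noncomputable def nc (t : ℝ) : ℝ := 1 / Real.sqrt (2 * (1 - t ^ 2))

/-- First component of the unit normal to `M_t`. -/
noncomputable def N1 (t : ℝ) (p q : Fin 3 → ℝ) : Fin 3 → ℝ := nc t • (q - t • p)

/-- Second component of the unit normal to `M_t`. -/
noncomputable def N2 (t : ℝ) (p q : Fin 3 → ℝ) : Fin 3 → ℝ := nc t • (p - t • q)

/-- The shape operator of `M_t`:
`A(v₁,v₂) = (1/√(2(1-t²)))·{t(v₁,v₂) - (v₂,v₁) + ⟨p,v₂⟩(p,-q)}`. -/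
noncomputable def shapeOp (t : ℝ) (p q : Fin 3 → ℝ) (v : (Fin 3 → ℝ) × (Fin 3 → ℝ)) :
    (Fin 3 → ℝ) × (Fin 3 → ℝ) :=
  (nc t • (t • v.1 - v.2 + (p ⬝ᵥ v.2) • p), nc t • (t • v.2 - v.1 - (p ⬝ᵥ v.2) • q))

/-- `λ₂ = (1/√2)√((1+t)/(1-t))`. -/
noncomputable def lam2 (t : ℝ) : ℝ := Real.sqrt ((1 + t) / (1 - t)) / Real.sqrt 2

/-- `λ₃ = -(1/√2)√((1-t)/(1+t))`. -/
noncomputable def lam3 (t : ℝ) : ℝ := -(Real.sqrt ((1 - t) / (1 + t)) / Real.sqrt 2)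

/-!
On pairs `(v, ±v)` with `v ⊥ p` the correction term `⟨p,v₂⟩(p,-q)` of the shape operator vanishes,
and `A` acts as `nc t · [[t, -1], [-1, t]]`, with eigenvalue `nc t · (t + 1) = λ₂` on `(v, -v)` and
`nc t · (t - 1) = λ₃` on `(v, v)`; both `J₁N` and `J₂N` are of this form with `v = nc t · (p × q)`.
That `A` kills `PN` is a direct computation using `⟨p,p⟩ = 1` and `⟨p,q⟩ = t`, and
`λ₂λ₃ = -nc(t)²(1 - t²) = -1/2`.
-/

section ShapeOperator

variable (t : ℝ) {p : Fin 3 → ℝ} (q : Fin 3 → ℝ) {v : Fin 3 → ℝ}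

theorem shapeOp_mk_neg_self (hv : p ⬝ᵥ v = 0) :
    shapeOp t p q (v, -v) = (nc t * (1 + t)) • (v, -v) := by
  simp only [shapeOp, dotProduct_neg, hv, neg_zero, zero_smul, Prod.smul_mk, Prod.mk.injEq]
  constructor <;> module

theorem shapeOp_mk_self (hv : p ⬝ᵥ v = 0) :
    shapeOp t p q (v, v) = (nc t * (t - 1)) • (v, v) := by
  simp only [shapeOp, hv, zero_smul, Prod.smul_mk, Prod.mk.injEq]
  constructor <;> module

theorem shapeOp_N1_neg_N2 (hp : p ⬝ᵥ p = 1) (hpq : p ⬝ᵥ q = t) :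
    shapeOp t p q (N1 t p q, -N2 t p q) = 0 := by
  have hpN2 : p ⬝ᵥ -N2 t p q = -(nc t * (1 - t * t)) := by
    simp only [N2, dotProduct_neg, dotProduct_smul, dotProduct_sub, hp, hpq, smul_eq_mul]
  rw [shapeOp, hpN2]
  simp only [N1, N2, Prod.mk_eq_zero]
  constructor <;> module

end ShapeOperator

section PrincipalCurvatures

variable {t : ℝ}

theorem sqrt_two_mul_one_sub_sq (h : t < 1) :
    Real.sqrt (2 * (1 - t ^ 2)) = Real.sqrt 2 * (Real.sqrt (1 - t) * Real.sqrt (1 + t)) := by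
  rw [show 2 * (1 - t ^ 2) = 2 * ((1 - t) * (1 + t)) by ring,
    Real.sqrt_mul zero_le_two, Real.sqrt_mul (by linarith)]

theorem nc_mul_one_add (h1 : -1 < t) (h2 : t < 1) : nc t * (1 + t) = lam2 t := by
  have hpos : 0 ≤ 1 + t := by linarith
  have : 0 < Real.sqrt (1 - t) := Real.sqrt_pos.2 (by linarith)
  have : 0 < Real.sqrt (1 + t) := Real.sqrt_pos.2 (by linarith)
  rw [nc, sqrt_two_mul_one_sub_sq h2, lam2, Real.sqrt_div hpos]
  field_simp
  linear_combination -Real.mul_self_sqrt hpos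

theorem nc_mul_sub_one (h1 : -1 < t) (h2 : t < 1) : nc t * (t - 1) = lam3 t := by
  have hpos : 0 ≤ 1 - t := by linarith
  have : 0 < Real.sqrt (1 - t) := Real.sqrt_pos.2 (by linarith)
  have : 0 < Real.sqrt (1 + t) := Real.sqrt_pos.2 (by linarith)
  rw [nc, sqrt_two_mul_one_sub_sq h2, lam3, Real.sqrt_div hpos]
  field_simp
  linear_combination Real.mul_self_sqrt hpos

theorem nc_sq (h1 : -1 < t) (h2 : t < 1) : nc t ^ 2 * (2 * (1 - t ^ 2)) = 1 := by
  have hpos : 0 < 2 * (1 - t ^ 2) := by nlinarith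
  rw [nc, div_pow, Real.sq_sqrt hpos.le, one_pow, one_div_mul_cancel hpos.ne']

theorem lam2_mul_lam3 (h1 : -1 < t) (h2 : t < 1) : lam2 t * lam3 t = -(1 / 2) := by
  rw [← nc_mul_one_add h1 h2, ← nc_mul_sub_one h1 h2]
  linear_combination -(1 / 2 : ℝ) * nc_sq h1 h2

end PrincipalCurvatures

theorem stmt_5_general (t : ℝ) (ht : t ∈ Set.Ioo (-1 : ℝ) 1) (p q : Fin 3 → ℝ)
    (hp : p ⬝ᵥ p = 1) (hpq : p ⬝ᵥ q = t) :
    -- A(J₁N) = λ₂ J₁N: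
    shapeOp t p q (nc t • crossProduct p q, -(nc t • crossProduct p q)) =
      lam2 t • (nc t • crossProduct p q, -(nc t • crossProduct p q)) ∧
    -- A(J₂N) = λ₃ J₂N:
    shapeOp t p q (nc t • crossProduct p q, nc t • crossProduct p q) =
      lam3 t • (nc t • crossProduct p q, nc t • crossProduct p q) ∧
    -- A X = 0, where X = PN - ⟨PN,N⟩N = PN = (N₁, -N₂):
    shapeOp t p q (N1 t p q, -(N2 t p q)) = 0 ∧
    -- λ₂ λ₃ = -1/2:
    lam2 t * lam3 t = -(1 / 2) ∧
    -- the Gauss–Kronecker curvature λ₁λ₂λ₃ vanishes (λ₁ = 0):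
    0 * lam2 t * lam3 t = 0 := by
  obtain ⟨h1, h2⟩ := ht
  have hJ : p ⬝ᵥ (nc t • crossProduct p q) = 0 := by
    rw [dotProduct_smul, dot_self_cross, smul_zero]
  refine ⟨?_, ?_, shapeOp_N1_neg_N2 t q hp hpq, lam2_mul_lam3 h1 h2, by simp⟩
  · rw [shapeOp_mk_neg_self t q hJ, nc_mul_one_add h1 h2]
  · rw [shapeOp_mk_self t q hJ, nc_mul_sub_one h1 h2]

/-- For `t ∈ (-1,1)` the shape operator of `M_t` has eigenvalues
`λ₁ = 0`, `λ₂ = (1/√2)√((1+t)/(1-t))`, `λ₃ = -(1/√2)√((1-t)/(1+t))` with eigenvectors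
`X = PN - ⟨PN,N⟩N = PN`, `J₁N = c(p×q, -(p×q))`, `J₂N = c(p×q, p×q)` respectively.
In particular `λ₂λ₃ = -1/2` and the Gauss–Kronecker curvature `λ₁λ₂λ₃` is zero. -/
theorem stmt_5 (t : ℝ) (ht : t ∈ Set.Ioo (-1 : ℝ) 1) (p q : Fin 3 → ℝ)
    (hp : p ⬝ᵥ p = 1) (hq : q ⬝ᵥ q = 1) (hpq : p ⬝ᵥ q = t) :
    -- A(J₁N) = λ₂ J₁N:
    shapeOp t p q (nc t • crossProduct p q, -(nc t • crossProduct p q)) =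
      lam2 t • (nc t • crossProduct p q, -(nc t • crossProduct p q)) ∧
    -- A(J₂N) = λ₃ J₂N:
    shapeOp t p q (nc t • crossProduct p q, nc t • crossProduct p q) =
      lam3 t • (nc t • crossProduct p q, nc t • crossProduct p q) ∧
    -- A X = 0, where X = PN - ⟨PN,N⟩N = PN = (N₁, -N₂):
    shapeOp t p q (N1 t p q, -(N2 t p q)) = 0 ∧
    -- λ₂ λ₃ = -1/2:
    lam2 t * lam3 t = -(1 / 2) ∧
    -- the Gauss–Kronecker curvature λ₁λ₂λ₃ vanishes (λ₁ = 0):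
    0 * lam2 t * lam3 t = 0 :=
  stmt_5_general t ht p q hp hpq
end

section
/- Any orientable hypersurface M of S²×S² with C = ⟨PN,N⟩ ≡ 1 satisfies A∘P = A (equivalently PᵀA = A), the 2-dimensional distribution D orthogonal to J₁N satisfies A|_D = 0 and P|_D = -Id, and D is a totally geodesic foliation. Consequently M is locally the Riemannian product of a curve in S² and an open subset of S². -/
/-!
`C ≡ 1` together with `|N₁|² + |N₂|² = 1` forces `N₂ = 0`, so the Weingarten equation of the second
factor reads `dψ ∘ A = 0`, which is `PA = A`. Since `N₁` is orthogonal to `φ` and to the image of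
`dφ`, and `dφ` is orthogonal to `φ`, the image of `dφ` lies on the line through `φ × N₁`, the first
component of `J₁N`; hence `dφ` vanishes on `D`. The second fundamental form `⟨dN₁ u, dφ w⟩` is
symmetric, so for `v ∈ D` we get `|dφ(Av)|² = ⟨dφ(A(Av)), dφ v⟩ = 0`. Finally `dφ(W) ≡ 0` for every
field `W` tangent to `D`, so its derivative vanishes as well, and `D` is totally geodesic.
-/

open Matrix

/-- Points of the (local) hypersurface are parametrized by a chart with values in `ℝ³`. -/
abbrev V3 := Fin 3 → ℝ

noncomputable def Dv (f : V3 → V3) (x v : V3) : V3 := fderiv ℝ f x v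

section Calculus

variable {𝕜 : Type*} [NontriviallyNormedField 𝕜] {E : Type*} [NormedAddCommGroup E]
  [NormedSpace 𝕜 E] {ι : Type*} [Fintype ι] {f g : E → ι → 𝕜} {x : E}

theorem fderiv_dotProduct_apply (hf : DifferentiableAt 𝕜 f x) (hg : DifferentiableAt 𝕜 g x)
    (v : E) :
    fderiv 𝕜 (fun y => f y ⬝ᵥ g y) x v = fderiv 𝕜 f x v ⬝ᵥ g x + f x ⬝ᵥ fderiv 𝕜 g x v := by
  have hcomp : ∀ {h : E → ι → 𝕜}, DifferentiableAt 𝕜 h x → ∀ i,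
      HasFDerivAt (fun y => h y i) ((ContinuousLinearMap.proj i).comp (fderiv 𝕜 h x)) x :=
    fun hh => hasFDerivAt_pi'.mp hh.hasFDerivAt
  have hsum :=
    HasFDerivAt.fun_sum (u := Finset.univ) fun i _ => (hcomp hf i).fun_mul (hcomp hg i)
  rw [show (fun y => f y ⬝ᵥ g y) = fun y => ∑ i, f y i * g y i from rfl, hsum.fderiv]
  simp only [_root_.sum_apply, _root_.add_apply, _root_.smul_apply, ContinuousLinearMap.comp_apply,
    ContinuousLinearMap.proj_apply, smul_eq_mul, dotProduct, ← Finset.sum_add_distrib]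
  exact Finset.sum_congr rfl fun i _ => by ring

theorem fderiv_dotProduct_add_dotProduct_fderiv_eq_zero (hf : DifferentiableAt 𝕜 f x)
    (hg : DifferentiableAt 𝕜 g x) {c : 𝕜} (hc : ∀ y, f y ⬝ᵥ g y = c) (v : E) :
    fderiv 𝕜 f x v ⬝ᵥ g x + f x ⬝ᵥ fderiv 𝕜 g x v = 0 := by
  rw [← fderiv_dotProduct_apply hf hg, show (fun y => f y ⬝ᵥ g y) = fun _ => c from funext hc,
    fderiv_const_apply]; rfl

theorem fderiv_dotProduct_self_eq_zero [CharZero 𝕜] (hf : DifferentiableAt 𝕜 f x) {c : 𝕜}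
    (hc : ∀ y, f y ⬝ᵥ f y = c) (v : E) : fderiv 𝕜 f x v ⬝ᵥ f x = 0 := by
  have h := fderiv_dotProduct_add_dotProduct_fderiv_eq_zero hf hf hc v
  rw [dotProduct_comm (f x), ← two_mul] at h
  exact (mul_eq_zero.mp h).resolve_left two_ne_zero

/-- Differentiating `⟨ν, df v⟩ = 0` gives `⟨dν u, df v⟩ = -⟨ν, d²f(u, v)⟩`, which is symmetric. -/
theorem fderiv_dotProduct_fderiv_comm [IsRCLikeNormedField 𝕜] {ν : E → ι → 𝕜}
    (hf : ContDiffAt 𝕜 2 f x) (hν : DifferentiableAt 𝕜 ν x)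
    (hnormal : ∀ y u, ν y ⬝ᵥ fderiv 𝕜 f y u = 0) (u v : E) :
    fderiv 𝕜 ν x u ⬝ᵥ fderiv 𝕜 f x v = fderiv 𝕜 ν x v ⬝ᵥ fderiv 𝕜 f x u := by
  have hf' : DifferentiableAt 𝕜 (fderiv 𝕜 f) x :=
    (hf.fderiv_right (m := 1) le_rfl).differentiableAt one_ne_zero
  have hsecond : ∀ u v, fderiv 𝕜 ν x u ⬝ᵥ fderiv 𝕜 f x v
      = -(ν x ⬝ᵥ fderiv 𝕜 (fderiv 𝕜 f) x u v) := fun u v => by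
    have h := fderiv_dotProduct_add_dotProduct_fderiv_eq_zero hν (hf'.clm_apply
      (differentiableAt_const v)) (fun y => hnormal y v) u
    rw [fderiv_clm_apply hf' (differentiableAt_const v)] at h
    simpa [eq_neg_iff_add_eq_zero] using h
  rw [hsecond, hsecond, (hf.isSymmSndFDerivAt (by simp)).eq]

end Calculus

theorem eq_zero_of_dotProduct_cross_eq_zero {R : Type*} [Field R] [LinearOrder R]
    [IsStrictOrderedRing R] {a b w : Fin 3 → R} (hab : a ⨯₃ b ≠ 0) (ha : w ⬝ᵥ a = 0)
    (hb : w ⬝ᵥ b = 0) (hc : w ⬝ᵥ a ⨯₃ b = 0) : w = 0 := by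
  have hcross : w ⨯₃ (a ⨯₃ b) = 0 := by
    rw [cross_cross_eq_smul_sub_smul', hb, dotProduct_comm, ha, zero_smul, zero_smul, sub_zero]
  have h := cross_dot_cross w (a ⨯₃ b) w (a ⨯₃ b)
  rw [hcross, zero_dotProduct, dotProduct_comm (a ⨯₃ b), hc, zero_mul, sub_zero, eq_comm,
    mul_eq_zero, dotProduct_self_eq_zero, dotProduct_self_eq_zero] at h
  exact h.resolve_right hab

theorem stmt_13_general
    (φ ψ N1 N2 : V3 → V3) (A : V3 → V3 →ₗ[ℝ] V3)
    (hφ : ContDiff ℝ 2 φ)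
    (hN1 : ContDiff ℝ 2 N1)
    (hsph1 : ∀ x, φ x ⬝ᵥ φ x = 1)
    (hNunit : ∀ x, N1 x ⬝ᵥ N1 x + N2 x ⬝ᵥ N2 x = 1)
    (hNtan1 : ∀ x, N1 x ⬝ᵥ φ x = 0)
    (hNnorm : ∀ x v, N1 x ⬝ᵥ Dv φ x v + N2 x ⬝ᵥ Dv ψ x v = 0)
    (hW1 : ∀ x v, fderiv ℝ N1 x v + (N1 x ⬝ᵥ Dv φ x v) • φ x = -(Dv φ x (A x v)))
    (hW2 : ∀ x v, fderiv ℝ N2 x v + (N2 x ⬝ᵥ Dv ψ x v) • ψ x = -(Dv ψ x (A x v)))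
    -- C ≡ 1:
    (hC1 : ∀ x, N1 x ⬝ᵥ N1 x - N2 x ⬝ᵥ N2 x = 1) :
    -- (a) P ∘ A = A:
    (∀ x v, ((Dv φ x (A x v), -(Dv ψ x (A x v))) : V3 × V3) =
      (Dv φ x (A x v), Dv ψ x (A x v))) ∧
    -- (b) on D = (J₁N)^⊥: A|_D = 0, P|_D = -Id, and dφ|_D = 0:
    (∀ x v,
      Dv φ x v ⬝ᵥ crossProduct (φ x) (N1 x) + Dv ψ x v ⬝ᵥ crossProduct (ψ x) (N2 x) = 0 →
      (Dv φ x (A x v) = 0 ∧ Dv ψ x (A x v) = 0) ∧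
      ((Dv φ x v, -(Dv ψ x v)) : V3 × V3) = -(Dv φ x v, Dv ψ x v) ∧
      Dv φ x v = 0) ∧
    -- (c) D is a totally geodesic foliation:
    (∀ W : V3 → V3, ContDiff ℝ 1 W →
      (∀ y, Dv φ y (W y) ⬝ᵥ crossProduct (φ y) (N1 y) +
            Dv ψ y (W y) ⬝ᵥ crossProduct (ψ y) (N2 y) = 0) →
      ∀ x v,
        Dv φ x v ⬝ᵥ crossProduct (φ x) (N1 x) +
          Dv ψ x v ⬝ᵥ crossProduct (ψ x) (N2 x) = 0 →
        Dv (fun y => Dv φ y (W y)) x v ⬝ᵥ crossProduct (φ x) (N1 x) +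
          Dv (fun y => Dv ψ y (W y)) x v ⬝ᵥ crossProduct (ψ x) (N2 x) = 0) := by
  obtain rfl : N2 = 0 :=
    funext fun x => dotProduct_self_eq_zero.mp (by linarith [hNunit x, hC1 x])
  have hN1unit (x : V3) : N1 x ⬝ᵥ N1 x = 1 := by simpa using hNunit x
  have hN1dφ (x v : V3) : N1 x ⬝ᵥ Dv φ x v = 0 := by simpa using hNnorm x v
  have hψA (x v : V3) : Dv ψ x (A x v) = 0 := by simpa [eq_comm] using hW2 x v
  have hWeingarten (x v : V3) : fderiv ℝ N1 x v = -Dv φ x (A x v) := by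
    simpa [hN1dφ] using hW1 x v
  have hAsymm (x v w : V3) : Dv φ x (A x v) ⬝ᵥ Dv φ x w = Dv φ x (A x w) ⬝ᵥ Dv φ x v := by
    simpa [hWeingarten, Dv] using fderiv_dotProduct_fderiv_comm hφ.contDiffAt
      (hN1.differentiable two_ne_zero x) hN1dφ v w
  have hJ₁N (x : V3) : φ x ⨯₃ N1 x ≠ 0 := fun h => by
    simpa [h, hsph1, hN1unit, dotProduct_comm (φ x), hNtan1] using
      cross_dot_cross (φ x) (N1 x) (φ x) (N1 x)
  have hD (x v : V3) (hv : Dv φ x v ⬝ᵥ φ x ⨯₃ N1 x = 0) : Dv φ x v = 0 :=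
    eq_zero_of_dotProduct_cross_eq_zero (hJ₁N x)
      (fderiv_dotProduct_self_eq_zero (hφ.differentiable two_ne_zero x) hsph1 v)
      (by rw [dotProduct_comm]; exact hN1dφ x v) hv
  have hAD (x v : V3) (hv : Dv φ x v = 0) : Dv φ x (A x v) = 0 :=
    dotProduct_self_eq_zero.mp (by rw [hAsymm, hv, dotProduct_zero])
  simp only [Pi.zero_apply, map_zero, dotProduct_zero, add_zero]
  refine ⟨fun x v => by simp [hψA], fun x v hv => ?_, fun W _ hW x v _ => ?_⟩
  · have hφv := hD x v hv
    exact ⟨⟨hAD x v hφv, hψA x v⟩, by simp [hφv], hφv⟩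
  · rw [show (fun y => Dv φ y (W y)) = 0 from funext fun y => hD y (W y) (hW y)]
    simp [Dv]

/-- If an orientable hypersurface `Φ = (φ,ψ) : M → S²×S²` has
`C = ⟨PN,N⟩ ≡ 1`, then `P∘A = A` (i.e. `P dΦ(Av) = dΦ(Av)`); the 2-dimensional
distribution `D` orthogonal to `J₁N` satisfies `A|_D = 0` and `P|_D = -Id` (hence
the first-factor component of `dΦ` vanishes on `D`, so `M` is locally the Riemannian
product of an integral curve of `J₁N` in `S²` and an open subset of `S²`); and `D`
is a totally geodesic foliation: `⟨∇_V W, J₁N⟩ = 0` for vector fields `V, W` in `D`.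
Here `J₁N = (φ × N₁, ψ × N₂)`. -/
theorem stmt_13
    (φ ψ N1 N2 : V3 → V3) (A : V3 → V3 →ₗ[ℝ] V3)
    (hφ : ContDiff ℝ 2 φ) (hψ : ContDiff ℝ 2 ψ)
    (hN1 : ContDiff ℝ 2 N1) (hN2 : ContDiff ℝ 2 N2)
    (hsph1 : ∀ x, φ x ⬝ᵥ φ x = 1) (hsph2 : ∀ x, ψ x ⬝ᵥ ψ x = 1)
    (hNunit : ∀ x, N1 x ⬝ᵥ N1 x + N2 x ⬝ᵥ N2 x = 1)
    (hNtan1 : ∀ x, N1 x ⬝ᵥ φ x = 0) (hNtan2 : ∀ x, N2 x ⬝ᵥ ψ x = 0)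
    (hNnorm : ∀ x v, N1 x ⬝ᵥ Dv φ x v + N2 x ⬝ᵥ Dv ψ x v = 0)
    (hW1 : ∀ x v, fderiv ℝ N1 x v + (N1 x ⬝ᵥ Dv φ x v) • φ x = -(Dv φ x (A x v)))
    (hW2 : ∀ x v, fderiv ℝ N2 x v + (N2 x ⬝ᵥ Dv ψ x v) • ψ x = -(Dv ψ x (A x v)))
    -- C ≡ 1:
    (hC1 : ∀ x, N1 x ⬝ᵥ N1 x - N2 x ⬝ᵥ N2 x = 1) :
    -- (a) P ∘ A = A:
    (∀ x v, ((Dv φ x (A x v), -(Dv ψ x (A x v))) : V3 × V3) =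
      (Dv φ x (A x v), Dv ψ x (A x v))) ∧
    -- (b) on D = (J₁N)^⊥: A|_D = 0, P|_D = -Id, and dφ|_D = 0:
    (∀ x v,
      Dv φ x v ⬝ᵥ crossProduct (φ x) (N1 x) + Dv ψ x v ⬝ᵥ crossProduct (ψ x) (N2 x) = 0 →
      (Dv φ x (A x v) = 0 ∧ Dv ψ x (A x v) = 0) ∧
      ((Dv φ x v, -(Dv ψ x v)) : V3 × V3) = -(Dv φ x v, Dv ψ x v) ∧
      Dv φ x v = 0) ∧
    -- (c) D is a totally geodesic foliation:
    (∀ W : V3 → V3, ContDiff ℝ 1 W →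
      (∀ y, Dv φ y (W y) ⬝ᵥ crossProduct (φ y) (N1 y) +
            Dv ψ y (W y) ⬝ᵥ crossProduct (ψ y) (N2 y) = 0) →
      ∀ x v,
        Dv φ x v ⬝ᵥ crossProduct (φ x) (N1 x) +
          Dv ψ x v ⬝ᵥ crossProduct (ψ x) (N2 x) = 0 →
        Dv (fun y => Dv φ y (W y)) x v ⬝ᵥ crossProduct (φ x) (N1 x) +
          Dv (fun y => Dv ψ y (W y)) x v ⬝ᵥ crossProduct (ψ x) (N2 x) = 0) :=
  stmt_13_general φ ψ N1 N2 A hφ hN1 hsph1 hNunit hNtan1 hNnorm hW1 hW2 hC1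
end
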